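/- arXiv:0901.0195 — 2 statements merged into one kernel-verified Lean document; each statement's English description precedes it below -/
import Mathlib

section
/- Let T be a positive trace-class operator on a separable Hilbert space H with eigenvalues λ₁ ≥ λ₂ ≥ ... (with multiplicity, orthonormal eigenbasis (φ_k)). Then for every orthonormal basis (ψ_k) of H and every n ≥ 1, ∑_{k=1}^n ⟨ψ_k, Tψ_k⟩ ≤ ∑_{k=1}^n λ_k. -/
/-!
In the eigenbasis `φ`, `⟪ψ k, T (ψ k)⟫ = ∑ j, λ j * ‖⟪φ j, ψ k⟫‖ ^ 2`, so the left-hand side is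
`∑ j, λ j * c j` for the weights `c j = ∑ k < n, ‖⟪φ j, ψ k⟫‖ ^ 2`. Bessel's inequality for `ψ`
gives `c j ≤ 1` and Parseval's identity for `φ` gives `∑ j, c j = n`. For such weights the sum is
largest when `c` is the indicator of the first `n` indices, since `λ` is decreasing:
termwise, `(λ j - λ n) * c j ≤ (λ j - λ n) * 𝟙[j < n]`.
-/

open Finset RCLike
open scoped InnerProductSpace

namespace HilbertBasis

variable {ι 𝕜 E : Type*} [RCLike 𝕜] [NormedAddCommGroup E] [InnerProductSpace 𝕜 E]

theorem hasSum_inner_map_self (b : HilbertBasis ι 𝕜 E) {T : E →L[𝕜] E} {μ : ι → 𝕜}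
    (hT : ∀ i, T (b i) = μ i • b i) (x : E) :
    HasSum (fun i => μ i * (‖⟪b i, x⟫_𝕜‖ ^ 2 : ℝ)) ⟪x, T x⟫_𝕜 := by
  convert ((b.hasSum_repr x).mapL T).mapL (innerSL 𝕜 x) using 1
  · ext i
    simp only [ContinuousLinearMap.map_smul, hT, innerSL_apply_apply, b.repr_apply_apply,
      ← inner_conj_symm x (b i)]
    push_cast
    rw [← RCLike.conj_mul]
    ring
  · rfl

theorem hasSum_re_inner_map_self (b : HilbertBasis ι 𝕜 E) {T : E →L[𝕜] E} {μ : ι → ℝ}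
    (hT : ∀ i, T (b i) = (μ i : 𝕜) • b i) (x : E) :
    HasSum (fun i => μ i * ‖⟪b i, x⟫_𝕜‖ ^ 2) (re ⟪x, T x⟫_𝕜) := by
  simpa only [reCLM_apply, ← ofReal_pow, ← ofReal_mul, ofReal_re] using
    (b.hasSum_inner_map_self hT x).mapL reCLM

theorem hasSum_norm_inner_sq (b : HilbertBasis ι 𝕜 E) (x : E) :
    HasSum (fun i => ‖⟪b i, x⟫_𝕜‖ ^ 2) (‖x‖ ^ 2) := by
  simpa [← inner_self_eq_norm_sq] using
    b.hasSum_re_inner_map_self (T := ContinuousLinearMap.id 𝕜 E) (μ := 1) (by simp) x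

end HilbertBasis

theorem Antitone.hasSum_mul_le_sum_range {lam c : ℕ → ℝ} (hlam : Antitone lam)
    (hc₀ : ∀ j, 0 ≤ c j) (hc₁ : ∀ j, c j ≤ 1) {n : ℕ} (hc : HasSum c n) {s : ℝ}
    (hs : HasSum (fun j => lam j * c j) s) :
    s ≤ ∑ j ∈ range n, lam j := by
  set head : ℕ → ℝ := fun j => if j < n then lam j - lam n else 0
  have hshift : HasSum (fun j => (lam j - lam n) * c j) (s - lam n * n) := by
    simpa only [sub_mul, mul_comm (lam n)] using hs.sub (hc.mul_left (lam n))
  have hhead : HasSum head (∑ j ∈ range n, (lam j - lam n)) := by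
    rw [← sum_congr rfl fun j hj => if_pos (mem_range.1 hj)]
    exact hasSum_sum_of_ne_finset_zero fun j hj => if_neg (mem_range.not.1 hj)
  have hterm : ∀ j, (lam j - lam n) * c j ≤ head j := by
    intro j
    simp only [head]
    split_ifs with hj
    · exact mul_le_of_le_one_right (sub_nonneg.2 (hlam hj.le)) (hc₁ j)
    · exact mul_nonpos_of_nonpos_of_nonneg (sub_nonpos.2 (hlam (not_lt.1 hj))) (hc₀ j)
  have hle := hasSum_le hterm hshift hhead
  rw [sum_sub_distrib, sum_const, card_range, nsmul_eq_mul] at hle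
  linarith

theorem arveson_kadison_majorization_general
    {H : Type*} [NormedAddCommGroup H] [InnerProductSpace ℂ H]
    (T : H →L[ℂ] H)
    (lam : ℕ → ℝ) (hmono : Antitone lam)
    (φ : HilbertBasis ℕ ℂ H)
    (heig : ∀ k, T (φ k) = (lam k : ℂ) • φ k) :
    ∀ (ψ : HilbertBasis ℕ ℂ H) (n : ℕ),
      ∑ k ∈ Finset.range n, ((inner ℂ (ψ k) (T (ψ k)) : ℂ)).re
        ≤ ∑ k ∈ Finset.range n, lam k := by
  intro ψ n
  set c : ℕ → ℝ := fun j => ∑ k ∈ range n, ‖⟪φ j, ψ k⟫_ℂ‖ ^ 2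
  have hform : HasSum (fun j => lam j * c j) (∑ k ∈ range n, re ⟪ψ k, T (ψ k)⟫_ℂ) := by
    simpa only [c, mul_sum] using hasSum_sum fun k _ => φ.hasSum_re_inner_map_self heig (ψ k)
  have htotal : HasSum c n := by
    simpa [c, ψ.orthonormal.norm_eq_one] using hasSum_sum fun k (_ : k ∈ range n) =>
      φ.hasSum_norm_inner_sq (ψ k)
  have hc₁ : ∀ j, c j ≤ 1 := fun j => by
    simpa [c, norm_inner_symm, φ.orthonormal.norm_eq_one] using
      ψ.orthonormal.sum_inner_products_le (s := range n) (φ j)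
  exact hmono.hasSum_mul_le_sum_range (fun j => by positivity) hc₁ htotal hform

/-- Arveson–Kadison majorization: for a positive trace-class operator `T` with
eigenvalues `λ₁ ≥ λ₂ ≥ ...` (with multiplicity, orthonormal eigenbasis `φ`),
every orthonormal basis `ψ` satisfies `∑_{k<n} ⟨ψ_k, Tψ_k⟩ ≤ ∑_{k<n} λ_k`. -/
theorem arveson_kadison_majorization
    {H : Type*} [NormedAddCommGroup H] [InnerProductSpace ℂ H] [CompleteSpace H]
    (T : H →L[ℂ] H) (hTsa : IsSelfAdjoint T)
    (hTpos : ∀ x : H, 0 ≤ ((inner ℂ x (T x) : ℂ)).re)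
    (lam : ℕ → ℝ) (hmono : Antitone lam) (hnonneg : ∀ k, 0 ≤ lam k)
    (htrace : Summable lam)
    (φ : HilbertBasis ℕ ℂ H)
    (heig : ∀ k, T (φ k) = (lam k : ℂ) • φ k) :
    ∀ (ψ : HilbertBasis ℕ ℂ H) (n : ℕ),
      ∑ k ∈ Finset.range n, ((inner ℂ (ψ k) (T (ψ k)) : ℂ)).re
        ≤ ∑ k ∈ Finset.range n, lam k :=
  arveson_kadison_majorization_general T lam hmono φ heig
end

section
/- (Mercer expansion) Under the hypotheses of Mercer's theorem, K(s,t) = ∑_{k=1}^∞ λ_k φ_k(s) φ_k(t), where (φ_k) are continuous orthonormal eigenfunctions of T with eigenvalues λ_k, and the series converges absolutely and uniformly on J × J. -/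
/-!
Positive semidefiniteness of `K` on finite point sets passes, by approximating the identity with
simple functions, to the quadratic form `⟪g, T g⟫ ≥ 0` of the integral operator. Applied to
`g - ∑_{k ∈ s} ⟪g, φ_k⟫ φ_k` this is Bessel's inequality `∑_{k ∈ s} λ_k ⟪g, φ_k⟫² ≤ ⟪g, T g⟫`,
which says that the continuous kernel `K - ∑_{k ∈ s} λ_k φ_k ⊗ φ_k` has a nonnegative form; testing
it against indicators of small intervals gives `∑_{k ∈ s} λ_k φ_k(t)² ≤ K(t, t)`.

By Cauchy–Schwarz the series `∑ λ_k φ_k(s) φ_k(t)` then converges absolutely, and for fixed `s`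
uniformly in `t`. Its sum `S(t)` is continuous and `K(s, ·) - S` is orthogonal to every `φ_k`; by
completeness it is orthogonal to `K(s, ·)` as well, so it has zero `L²` norm and vanishes. Finally
`∑ λ_k φ_k(t)² = K(t, t)` converges monotonically, hence uniformly by Dini's theorem, and
Cauchy–Schwarz spreads the uniform convergence from the diagonal to the square.
-/

open MeasureTheory Set Filter Topology
open scoped ENNReal

section KernelForm

variable {α : Type*} [MeasurableSpace α] {μ : Measure α}

/-- `kernelForm μ K f g = ⟪f, T g⟫` for the integral operator `T` with kernel `K` on `L²(μ)`. -/
noncomputable def kernelForm (μ : Measure α) (K : α → α → ℝ) (f g : α → ℝ) : ℝ :=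
  ∫ p, K p.1 p.2 * (f p.1 * g p.2) ∂μ.prod μ

lemma MeasureTheory.SimpleFunc.sum_range_mul_indicator {β : Type*} (ξ : SimpleFunc α β)
    (H : β → ℝ) (g : α → ℝ) (s : α) :
    ∑ x ∈ ξ.range, H x * (ξ ⁻¹' {x}).indicator g s = H (ξ s) * g s := by
  rw [Finset.sum_eq_single (ξ s)]
  · simp
  · intro x _ hx
    rw [Set.indicator_of_notMem (by simpa using Ne.symm hx), mul_zero]
  · exact fun h => absurd (ξ.mem_range_self s) h

variable {K : α → α → ℝ}

lemma integrable_kernel_mul_mul (hK : MemLp (fun p : α × α => K p.1 p.2) ∞ (μ.prod μ))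
    {f g : α → ℝ} (hf : Integrable f μ) (hg : Integrable g μ) :
    Integrable (fun p : α × α => K p.1 p.2 * (f p.1 * g p.2)) (μ.prod μ) :=
  (hf.mul_prod hg).mul_of_top_right hK

lemma kernelForm_sub_sum_right (hK : MemLp (fun p : α × α => K p.1 p.2) ∞ (μ.prod μ))
    {φ : ℕ → α → ℝ} (hφ : ∀ k, Integrable (φ k) μ) {f g : α → ℝ} (hf : Integrable f μ)
    (hg : Integrable g μ) (c : ℕ → ℝ) (s : Finset ℕ) :
    kernelForm μ K f (fun t => g t - ∑ k ∈ s, c k * φ k t) =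
      kernelForm μ K f g - ∑ k ∈ s, c k * kernelForm μ K f (φ k) := by
  have hint : ∀ k, Integrable (fun p : α × α => c k * (K p.1 p.2 * (f p.1 * φ k p.2)))
      (μ.prod μ) := fun k => (integrable_kernel_mul_mul hK hf (hφ k)).const_mul _
  have hsplit : ∀ p : α × α, K p.1 p.2 * (f p.1 * (g p.2 - ∑ k ∈ s, c k * φ k p.2)) =
      K p.1 p.2 * (f p.1 * g p.2) - ∑ k ∈ s, c k * (K p.1 p.2 * (f p.1 * φ k p.2)) := by
    intro p
    simp only [mul_sub, Finset.mul_sum]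
    exact congrArg _ (Finset.sum_congr rfl fun k _ => by ring)
  simp only [kernelForm, hsplit]
  rw [integral_sub (integrable_kernel_mul_mul hK hf hg) (integrable_finsetSum _ fun k _ => hint k),
    integral_finsetSum _ fun k _ => hint k]
  simp only [integral_const_mul]

variable [SFinite μ]

lemma kernelForm_comm (hK : ∀ᵐ p ∂μ.prod μ, K p.1 p.2 = K p.2 p.1) (f g : α → ℝ) :
    kernelForm μ K f g = kernelForm μ K g f := by
  rw [kernelForm, kernelForm, ← integral_prod_swap]
  refine integral_congr_ae ?_
  filter_upwards [hK] with p hp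
  simp only [Prod.fst_swap, Prod.snd_swap]
  rw [hp]
  ring

lemma kernelForm_eigen_right (hK : MemLp (fun p : α × α => K p.1 p.2) ∞ (μ.prod μ))
    {φ : α → ℝ} {c : ℝ} (hφ : Integrable φ μ) (heig : ∀ᵐ s ∂μ, ∫ t, K s t * φ t ∂μ = c * φ s)
    {f : α → ℝ} (hf : Integrable f μ) : kernelForm μ K f φ = c * ∫ s, f s * φ s ∂μ := by
  rw [kernelForm, integral_prod _ (integrable_kernel_mul_mul hK hf hφ), ← integral_const_mul]
  refine integral_congr_ae ?_
  filter_upwards [heig] with s hs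
  simp_rw [mul_left_comm (K s _) (f s), integral_const_mul, hs]
  ring

lemma kernelForm_sub_sum_mul_mul (hK : MemLp (fun p : α × α => K p.1 p.2) ∞ (μ.prod μ))
    {φ : ℕ → α → ℝ} (hφ : ∀ k, MemLp (φ k) ∞ μ) {g : α → ℝ} (hg : Integrable g μ)
    (lam : ℕ → ℝ) (s : Finset ℕ) :
    kernelForm μ (fun x y => K x y - ∑ k ∈ s, lam k * φ k x * φ k y) g g =
      kernelForm μ K g g - ∑ k ∈ s, lam k * (∫ t, g t * φ k t ∂μ) ^ 2 := by
  have hgφ : ∀ k, Integrable (fun t => g t * φ k t) μ := fun k => hg.mul_of_top_left (hφ k)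
  have hint : ∀ k, Integrable (fun p : α × α =>
      lam k * ((g p.1 * φ k p.1) * (g p.2 * φ k p.2))) (μ.prod μ) :=
    fun k => ((hgφ k).mul_prod (hgφ k)).const_mul _
  have hsplit : ∀ p : α × α, (K p.1 p.2 - ∑ k ∈ s, lam k * φ k p.1 * φ k p.2) *
      (g p.1 * g p.2) = K p.1 p.2 * (g p.1 * g p.2) -
        ∑ k ∈ s, lam k * ((g p.1 * φ k p.1) * (g p.2 * φ k p.2)) := by
    intro p
    simp only [sub_mul, Finset.sum_mul]
    exact congrArg _ (Finset.sum_congr rfl fun k _ => by ring)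
  simp only [kernelForm, hsplit]
  rw [integral_sub (integrable_kernel_mul_mul hK hg hg) (integrable_finsetSum _ fun k _ => hint k),
    integral_finsetSum _ fun k _ => hint k]
  refine congrArg _ (Finset.sum_congr rfl fun k _ => ?_)
  rw [integral_const_mul, integral_prod_mul (fun t => g t * φ k t) (fun t => g t * φ k t), sq]

lemma kernelForm_indicator_one {S I : Set α} (hI : MeasurableSet I) (hIS : I ⊆ S) :
    kernelForm (μ.restrict S) K (I.indicator 1) (I.indicator 1) =
      ∫ p in I ×ˢ I, K p.1 p.2 ∂μ.prod μ := by
  have hind : ∀ p : α × α, K p.1 p.2 * (I.indicator 1 p.1 * I.indicator 1 p.2) =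
      (I ×ˢ I).indicator (fun p => K p.1 p.2) p := by
    rintro ⟨s, t⟩
    by_cases hs : s ∈ I <;> by_cases ht : t ∈ I <;> simp [hs, ht]
  simp only [kernelForm, hind]
  rw [Measure.prod_restrict, integral_indicator (hI.prod hI),
    Measure.restrict_restrict (hI.prod hI), Set.inter_eq_left.2 (prod_mono hIS hIS)]

lemma kernelForm_comp_simpleFunc {β : Type*} (ξ : SimpleFunc α β) (K : β → β → ℝ) {g : α → ℝ}
    (hg : Integrable g μ) :
    kernelForm μ (fun s t => K (ξ s) (ξ t)) g g =
      ∑ x ∈ ξ.range, ∑ y ∈ ξ.range,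
        (∫ s in ξ ⁻¹' {x}, g s ∂μ) * (∫ s in ξ ⁻¹' {y}, g s ∂μ) * K x y := by
  have hind : ∀ x, Integrable ((ξ ⁻¹' {x}).indicator g) μ :=
    fun x => hg.indicator (ξ.measurableSet_preimage _)
  have hsplit : ∀ p : α × α, K (ξ p.1) (ξ p.2) * (g p.1 * g p.2) =
      ∑ x ∈ ξ.range, ∑ y ∈ ξ.range,
        K x y * ((ξ ⁻¹' {x}).indicator g p.1 * (ξ ⁻¹' {y}).indicator g p.2) := by
    intro p
    symm
    calc _ = ∑ x ∈ ξ.range, (∑ y ∈ ξ.range, K x y * (ξ ⁻¹' {y}).indicator g p.2) *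
          (ξ ⁻¹' {x}).indicator g p.1 := by
          simp_rw [Finset.sum_mul]
          exact Finset.sum_congr rfl fun x _ => Finset.sum_congr rfl fun y _ => by ring
      _ = K (ξ p.1) (ξ p.2) * (g p.1 * g p.2) := by
          simp_rw [SimpleFunc.sum_range_mul_indicator]
          ring
  have hint : ∀ x y, Integrable (fun p : α × α =>
      K x y * ((ξ ⁻¹' {x}).indicator g p.1 * (ξ ⁻¹' {y}).indicator g p.2)) (μ.prod μ) :=
    fun x y => ((hind x).mul_prod (hind y)).const_mul _
  rw [kernelForm, integral_congr_ae (Eventually.of_forall hsplit),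
    integral_finsetSum _ fun x _ => integrable_finsetSum _ fun y _ => hint x y]
  refine Finset.sum_congr rfl fun x _ => ?_
  rw [integral_finsetSum _ fun y _ => hint x y]
  refine Finset.sum_congr rfl fun y _ => ?_
  rw [integral_const_mul, integral_prod_mul ((ξ ⁻¹' {x}).indicator g) ((ξ ⁻¹' {y}).indicator g),
    integral_indicator (ξ.measurableSet_preimage _),
    integral_indicator (ξ.measurableSet_preimage _), mul_comm]

end KernelForm

def IsPosSemidefKernelOn {β : Type*} (S : Set β) (K : β → β → ℝ) : Prop :=
  ∀ (n : ℕ) (t : Fin n → β) (c : Fin n → ℝ), (∀ i, t i ∈ S) →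
    0 ≤ ∑ i, ∑ j, c i * c j * K (t i) (t j)

namespace IsPosSemidefKernelOn

variable {α : Type*} {S : Set α} {K : α → α → ℝ}

lemma sum_finset_nonneg (hK : IsPosSemidefKernelOn S K) {F : Finset α} (hF : ∀ x ∈ F, x ∈ S)
    (c : α → ℝ) : 0 ≤ ∑ x ∈ F, ∑ y ∈ F, c x * c y * K x y := by
  have := hK F.card (fun i => F.equivFin.symm i) (fun i => c (F.equivFin.symm i))
    fun i => hF _ (F.equivFin.symm i).2
  refine this.trans_eq ?_
  simp only [← F.sum_coe_sort]
  exact Fintype.sum_equiv _ _ _ fun i => Fintype.sum_equiv _ _ _ fun j => rfl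

variable [MetricSpace α] [MeasurableSpace α] [OpensMeasurableSpace α] {μ : Measure α} [SFinite μ]

theorem kernelForm_nonneg (hK : IsPosSemidefKernelOn S K) (hS : IsCompact S)
    (hKc : ContinuousOn (fun p : α × α => K p.1 p.2) (S ×ˢ S)) {g : α → ℝ}
    (hg : IntegrableOn g S μ) : 0 ≤ kernelForm (μ.restrict S) K g g := by
  rcases S.eq_empty_or_nonempty with rfl | ⟨y₀, hy₀⟩
  · simp [kernelForm]
  have := hS.isSeparable.separableSpace
  obtain ⟨M, hM⟩ := (hS.prod hS).exists_bound_of_continuousOn hKc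
  set ξ : ℕ → SimpleFunc α α := SimpleFunc.approxOn id measurable_id S y₀ hy₀
  have hξS : ∀ n s, ξ n s ∈ S := SimpleFunc.approxOn_mem measurable_id hy₀
  have hmem : ∀ᵐ p ∂(μ.restrict S).prod (μ.restrict S), p ∈ S ×ˢ S := by
    rw [Measure.prod_restrict]
    exact ae_restrict_mem (hS.measurableSet.prod hS.measurableSet)
  -- `ξ n → id` pointwise through simple functions with values in `S`; the form of each step
  -- kernel `K (ξ n s) (ξ n t)` is a finite positive semidefinite sum.
  have hlim : Tendsto (fun n => kernelForm (μ.restrict S) (fun s t => K (ξ n s) (ξ n t)) g g)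
      atTop (𝓝 (kernelForm (μ.restrict S) K g g)) := by
    refine tendsto_integral_of_dominated_convergence (fun p => M * ‖g p.1 * g p.2‖)
      (fun n => ?_) ((hg.mul_prod hg).norm.const_mul M) (fun n => ?_) ?_
    · exact (((ξ n).comp Prod.fst measurable_fst).pair ((ξ n).comp Prod.snd measurable_snd)
        |>.map fun q => K q.1 q.2).aestronglyMeasurable.mul (hg.mul_prod hg).aestronglyMeasurable
    · filter_upwards [hmem] with p _
      rw [norm_mul]
      exact mul_le_mul_of_nonneg_right (hM (ξ n p.1, ξ n p.2) ⟨hξS n p.1, hξS n p.2⟩)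
        (norm_nonneg _)
    · filter_upwards [hmem] with p hp
      have hξ : ∀ s ∈ S, Tendsto (fun n => ξ n s) atTop (𝓝 s) :=
        fun s hs => SimpleFunc.tendsto_approxOn measurable_id hy₀ (subset_closure hs)
      refine ((hKc p hp).tendsto.comp (tendsto_nhdsWithin_iff.2
        ⟨(hξ _ hp.1).prodMk_nhds (hξ _ hp.2), Eventually.of_forall fun n =>
          ⟨hξS n p.1, hξS n p.2⟩⟩)).mul_const _
  refine ge_of_tendsto' hlim fun n => ?_
  rw [kernelForm_comp_simpleFunc _ _ hg]
  refine hK.sum_finset_nonneg (fun x hx => ?_) _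
  obtain ⟨s, rfl⟩ := (SimpleFunc.mem_range.1 hx)
  exact hξS n s

end IsPosSemidefKernelOn

section Bessel

variable {α : Type*} [MeasurableSpace α] {μ : Measure α} [IsFiniteMeasure μ] {K : α → α → ℝ}

lemma integral_sub_sum_mul_eq_zero {φ : ℕ → α → ℝ} (hφ : ∀ k, MemLp (φ k) ∞ μ)
    (hon : ∀ j k, ∫ t, φ j t * φ k t ∂μ = if j = k then 1 else 0) {g : α → ℝ}
    (hg : Integrable g μ) {s : Finset ℕ} {k : ℕ} (hk : k ∈ s) :
    ∫ t, (g t - ∑ j ∈ s, (∫ u, g u * φ j u ∂μ) * φ j t) * φ k t ∂μ = 0 := by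
  have hint : ∀ j, Integrable (fun t => (∫ u, g u * φ j u ∂μ) * (φ j t * φ k t)) μ :=
    fun j => (((hφ j).integrable le_top).mul_of_top_left (hφ k)).const_mul _
  have hsplit : ∀ t, (g t - ∑ j ∈ s, (∫ u, g u * φ j u ∂μ) * φ j t) * φ k t =
      g t * φ k t - ∑ j ∈ s, (∫ u, g u * φ j u ∂μ) * (φ j t * φ k t) := by
    intro t
    simp only [sub_mul, Finset.sum_mul]
    exact congrArg _ (Finset.sum_congr rfl fun j _ => by ring)
  have hgφ : Integrable (fun t => g t * φ k t) μ := hg.mul_of_top_left (hφ k)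
  simp only [hsplit]
  rw [integral_sub hgφ (integrable_finsetSum _ fun j _ => hint j),
    integral_finsetSum _ fun j _ => hint j]
  simp [integral_const_mul, hon, hk]

theorem sum_mul_sq_integral_le_kernelForm (hK : MemLp (fun p : α × α => K p.1 p.2) ∞ (μ.prod μ))
    (hKsymm : ∀ᵐ p ∂μ.prod μ, K p.1 p.2 = K p.2 p.1)
    (hpsd : ∀ g, Integrable g μ → 0 ≤ kernelForm μ K g g) {lam : ℕ → ℝ} {φ : ℕ → α → ℝ}
    (hφ : ∀ k, MemLp (φ k) ∞ μ) (hon : ∀ j k, ∫ t, φ j t * φ k t ∂μ = if j = k then 1 else 0)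
    (heig : ∀ k, ∀ᵐ s ∂μ, ∫ t, K s t * φ k t ∂μ = lam k * φ k s) {g : α → ℝ}
    (hg : Integrable g μ) (s : Finset ℕ) :
    ∑ k ∈ s, lam k * (∫ t, g t * φ k t ∂μ) ^ 2 ≤ kernelForm μ K g g := by
  have hφi : ∀ k, Integrable (φ k) μ := fun k => (hφ k).integrable le_top
  set c : ℕ → ℝ := fun k => ∫ t, g t * φ k t ∂μ
  set h : α → ℝ := fun t => g t - ∑ k ∈ s, c k * φ k t
  have hh : Integrable h μ := hg.sub (integrable_finsetSum _ fun k _ => (hφi k).const_mul _)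
  have hexpand : ∀ f, Integrable f μ → kernelForm μ K f h =
      kernelForm μ K f g - ∑ k ∈ s, c k * (lam k * ∫ t, f t * φ k t ∂μ) := fun f hf => by
    rw [kernelForm_sub_sum_right hK hφi hf hg]
    exact congrArg _ (Finset.sum_congr rfl fun k _ => by
      rw [kernelForm_eigen_right hK (hφi k) (heig k) hf])
  -- `h ⟂ φ k` for `k ∈ s`, so `⟪h, T h⟫ = ⟪h, T g⟫ = ⟪g, T h⟫ = ⟪g, T g⟫ - ∑ λ_k c_k²`.
  have hform := hpsd h hh
  rw [hexpand h hh, Finset.sum_eq_zero fun k hk => by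
      rw [integral_sub_sum_mul_eq_zero hφ hon hg hk, mul_zero, mul_zero],
    sub_zero, kernelForm_comm hKsymm, hexpand g hg] at hform
  calc ∑ k ∈ s, lam k * c k ^ 2 = ∑ k ∈ s, c k * (lam k * c k) :=
        Finset.sum_congr rfl fun k _ => by ring
    _ ≤ kernelForm μ K g g := by linarith

end Bessel

lemma diag_nonneg_of_kernelForm_nonneg {a b : ℝ} (hab : a < b) {R : ℝ → ℝ → ℝ}
    (hR : ContinuousOn (fun p : ℝ × ℝ => R p.1 p.2) (Icc a b ×ˢ Icc a b))
    (hform : ∀ g, IntegrableOn g (Icc a b) →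
      0 ≤ kernelForm (volume.restrict (Icc a b)) R g g)
    {t : ℝ} (ht : t ∈ Icc a b) : 0 ≤ R t t := by
  by_contra! hneg
  obtain ⟨δ, hδ, hclose⟩ :=
    Metric.continuousWithinAt_iff.1 (hR (t, t) ⟨ht, ht⟩) (-R t t / 2) (by linarith)
  set I := Icc (max a (t - δ / 2)) (min b (t + δ / 2))
  have hIS : I ⊆ Icc a b := Icc_subset_Icc (le_max_left _ _) (min_le_left _ _)
  have hIne : max a (t - δ / 2) < min b (t + δ / 2) :=
    lt_min (max_lt hab (by linarith [ht.2])) (max_lt (by linarith [ht.1]) (by linarith))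
  have hnear : ∀ s ∈ I, dist s t < δ := fun s hs => by
    rw [Real.dist_eq, abs_lt]
    constructor <;> linarith [hs.1, hs.2, le_max_right a (t - δ / 2), min_le_right b (t + δ / 2)]
  have hRI : ∀ p ∈ I ×ˢ I, R p.1 p.2 ≤ R t t / 2 := by
    rintro ⟨s, u⟩ ⟨hs, hu⟩
    have := hclose ⟨hIS hs, hIS hu⟩ (max_lt (hnear s hs) (hnear u hu))
    rw [Real.dist_eq, abs_lt] at this
    linarith [this.2]
  have hle : ∫ p in I ×ˢ I, R p.1 p.2 ≤ ∫ _ in I ×ˢ I, R t t / 2 :=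
    setIntegral_mono_on ((hR.mono (prod_mono hIS hIS)).integrableOn_compact
      (isCompact_Icc.prod isCompact_Icc))
      (integrableOn_const (isCompact_Icc.prod isCompact_Icc).measure_ne_top)
      (measurableSet_Icc.prod measurableSet_Icc) hRI
  have hvol : 0 < volume.real (I ×ˢ I) := by
    rw [Measure.volume_eq_prod, measureReal_prod_prod, Real.volume_real_Icc_of_le hIne.le]
    exact mul_pos (sub_pos.2 hIne) (sub_pos.2 hIne)
  have hpos := hform (I.indicator 1) ((integrable_const (1 : ℝ)).indicator measurableSet_Icc)
  rw [kernelForm_indicator_one measurableSet_Icc hIS,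
    ← Measure.volume_eq_prod] at hpos
  rw [setIntegral_const, smul_eq_mul] at hle
  nlinarith

section Series

variable {w x y : ℕ → ℝ}

lemma summable_abs_mul_mul (hw : ∀ k, 0 ≤ w k) (hx : Summable fun k => w k * x k ^ 2)
    (hy : Summable fun k => w k * y k ^ 2) : Summable fun k => |w k * x k * y k| := by
  refine ((hx.add hy).div_const 2).of_nonneg_of_le (fun k => abs_nonneg _) fun k => ?_
  have hxy : |x k| * |y k| ≤ (x k ^ 2 + y k ^ 2) / 2 := by
    nlinarith [two_mul_le_add_sq |x k| |y k|, sq_abs (x k), sq_abs (y k)]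
  calc |w k * x k * y k| = w k * (|x k| * |y k|) := by
        rw [abs_mul, abs_mul, abs_of_nonneg (hw k), mul_assoc]
    _ ≤ w k * ((x k ^ 2 + y k ^ 2) / 2) := mul_le_mul_of_nonneg_left hxy (hw k)
    _ = (w k * x k ^ 2 + w k * y k ^ 2) / 2 := by ring

lemma sq_tsum_mul_mul_le (hw : ∀ k, 0 ≤ w k) (hx : Summable fun k => w k * x k ^ 2)
    (hy : Summable fun k => w k * y k ^ 2) :
    (∑' k, w k * x k * y k) ^ 2 ≤ (∑' k, w k * x k ^ 2) * ∑' k, w k * y k ^ 2 := by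
  have hxy := (summable_abs_mul_mul hw hx hy).of_abs
  refine le_of_tendsto' (hxy.hasSum.tendsto_sum_nat.pow 2) fun n => ?_
  have hx0 : ∀ k, 0 ≤ w k * x k ^ 2 := fun k => mul_nonneg (hw k) (sq_nonneg _)
  have hy0 : ∀ k, 0 ≤ w k * y k ^ 2 := fun k => mul_nonneg (hw k) (sq_nonneg _)
  calc (∑ k ∈ Finset.range n, w k * x k * y k) ^ 2
      ≤ (∑ k ∈ Finset.range n, w k * x k ^ 2) * ∑ k ∈ Finset.range n, w k * y k ^ 2 :=
        Finset.sum_sq_le_sum_mul_sum_of_sq_le_mul _ (fun k _ => hx0 k) (fun k _ => hy0 k)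
          fun k _ => le_of_eq (by ring)
    _ ≤ _ := mul_le_mul (hx.sum_le_tsum _ fun k _ => hx0 k) (hy.sum_le_tsum _ fun k _ => hy0 k)
        (Finset.sum_nonneg fun k _ => hy0 k) (tsum_nonneg hx0)

lemma sq_tsum_sub_sum_mul_mul_le (hw : ∀ k, 0 ≤ w k) (hx : Summable fun k => w k * x k ^ 2)
    (hy : Summable fun k => w k * y k ^ 2) (N : ℕ) :
    (∑' k, w k * x k * y k - ∑ k ∈ Finset.range N, w k * x k * y k) ^ 2 ≤
      (∑' k, w k * x k ^ 2 - ∑ k ∈ Finset.range N, w k * x k ^ 2) * ∑' k, w k * y k ^ 2 := by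
  have hxy := (summable_abs_mul_mul hw hx hy).of_abs
  rw [← hxy.sum_add_tsum_nat_add N, ← hx.sum_add_tsum_nat_add N, add_sub_cancel_left,
    add_sub_cancel_left]
  refine (sq_tsum_mul_mul_le (w := fun k => w (k + N)) (x := fun k => x (k + N))
    (y := fun k => y (k + N)) (fun k => hw _) ((summable_nat_add_iff N).2 hx)
    ((summable_nat_add_iff N).2 hy)).trans
    (mul_le_mul_of_nonneg_left ?_ (tsum_nonneg fun k => mul_nonneg (hw _) (sq_nonneg _)))
  rw [← hy.sum_add_tsum_nat_add N]
  exact le_add_of_nonneg_left (Finset.sum_nonneg fun k _ => mul_nonneg (hw k) (sq_nonneg _))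

end Series

lemma tendstoUniformlyOn_of_sq_sub_le {X : Type*} {S : Set X} {F D : ℕ → X → ℝ} {f d : X → ℝ}
    {M : ℝ} (hD : TendstoUniformlyOn D d atTop S)
    (h : ∀ N, ∀ x ∈ S, (f x - F N x) ^ 2 ≤ (d x - D N x) * M) :
    TendstoUniformlyOn F f atTop S := by
  rw [Metric.tendstoUniformlyOn_iff] at hD ⊢
  intro ε hε
  filter_upwards [hD (ε ^ 2 / (|M| + 1)) (by positivity)] with N hN x hx
  have hNx := hN x hx
  rw [Real.dist_eq] at hNx ⊢
  refine abs_lt_of_sq_lt_sq ?_ hε.le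
  calc (f x - F N x) ^ 2 ≤ |d x - D N x| * |M| :=
        (h N x hx).trans (by rw [← abs_mul]; exact le_abs_self _)
    _ ≤ ε ^ 2 / (|M| + 1) * |M| := mul_le_mul_of_nonneg_right hNx.le (abs_nonneg _)
    _ < ε ^ 2 := by
      rw [div_mul_eq_mul_div, div_lt_iff₀ (by positivity)]
      nlinarith [pow_pos hε 2]

lemma tendsto_setIntegral_mul_of_tendstoUniformlyOn {X : Type*} [MeasurableSpace X]
    {μ : Measure X} {S : Set X} (hS : MeasurableSet S) {F : ℕ → X → ℝ} {f ψ : X → ℝ}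
    (hF : TendstoUniformlyOn F f atTop S) (hFψ : ∀ n, IntegrableOn (fun x => F n x * ψ x) S μ)
    (hfψ : IntegrableOn (fun x => f x * ψ x) S μ) (hψ : IntegrableOn ψ S μ) :
    Tendsto (fun n => ∫ x in S, F n x * ψ x ∂μ) atTop (𝓝 (∫ x in S, f x * ψ x ∂μ)) := by
  have hC : 0 ≤ ∫ x in S, ‖ψ x‖ ∂μ := integral_nonneg fun x => norm_nonneg _
  rw [Metric.tendsto_nhds]
  intro ε hε
  filter_upwards [Metric.tendstoUniformlyOn_iff.1 hF (ε / (∫ x in S, ‖ψ x‖ ∂μ + 1))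
    (by positivity)] with n hn
  rw [dist_eq_norm, ← integral_sub (hFψ n) hfψ]
  calc ‖∫ x in S, (F n x * ψ x - f x * ψ x) ∂μ‖
      ≤ ∫ x in S, ε / (∫ x in S, ‖ψ x‖ ∂μ + 1) * ‖ψ x‖ ∂μ := by
        refine norm_integral_le_of_norm_le (hψ.norm.const_mul _)
          (ae_restrict_of_forall_mem hS fun x hx => ?_)
        rw [← sub_mul, norm_mul, ← dist_eq_norm, dist_comm]
        exact mul_le_mul_of_nonneg_right (hn x hx).le (norm_nonneg _)
    _ = ε / (∫ x in S, ‖ψ x‖ ∂μ + 1) * ∫ x in S, ‖ψ x‖ ∂μ := integral_const_mul _ _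
    _ < ε := by
      rw [div_mul_eq_mul_div, div_lt_iff₀ (by positivity)]
      nlinarith

lemma tendsto_sum_range_mul_setIntegral {X : Type*} [TopologicalSpace X] [T2Space X]
    [MeasurableSpace X] [OpensMeasurableSpace X] {μ : Measure X} [IsFiniteMeasureOnCompacts μ]
    {S : Set X} (hS : IsCompact S) {c : ℕ → ℝ} {φ : ℕ → X → ℝ} {f ψ : X → ℝ}
    (hφ : ∀ k, ContinuousOn (φ k) S)
    (hf : TendstoUniformlyOn (fun N x => ∑ k ∈ Finset.range N, c k * φ k x) f atTop S)
    (hψ : ContinuousOn ψ S) :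
    Tendsto (fun N => ∑ k ∈ Finset.range N, c k * ∫ x in S, φ k x * ψ x ∂μ) atTop
      (𝓝 (∫ x in S, f x * ψ x ∂μ)) := by
  have hint : ∀ g : X → ℝ, ContinuousOn g S → IntegrableOn g S μ :=
    fun g hg => hg.integrableOn_compact hS
  have hFcont : ∀ N, ContinuousOn (fun x => ∑ k ∈ Finset.range N, c k * φ k x) S :=
    fun N => continuousOn_finsetSum _ fun k _ => continuousOn_const.mul (hφ k)
  refine (tendsto_setIntegral_mul_of_tendstoUniformlyOn hS.measurableSet hf
    (fun N => hint _ ((hFcont N).mul hψ))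
    (hint _ ((hf.continuousOn (Frequently.of_forall hFcont)).mul hψ)) (hint _ hψ)).congr
    fun N => ?_
  calc ∫ x in S, (∑ k ∈ Finset.range N, c k * φ k x) * ψ x ∂μ
      = ∫ x in S, ∑ k ∈ Finset.range N, c k * (φ k x * ψ x) ∂μ := by
        congr 1 with x
        rw [Finset.sum_mul]
        exact Finset.sum_congr rfl fun k _ => by ring
    _ = _ := by
        rw [integral_finsetSum _ fun k _ =>
          (hint (fun x => φ k x * ψ x) ((hφ k).mul hψ)).const_mul _]
        simp_rw [integral_const_mul]

lemma ContinuousOn.memLp_top_restrict {X : Type*} [TopologicalSpace X] [T2Space X]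
    [MeasurableSpace X] [OpensMeasurableSpace X] {μ : Measure X} {S : Set X} {f : X → ℝ}
    (hf : ContinuousOn f S) (hS : IsCompact S) : MemLp f ∞ (μ.restrict S) := by
  obtain ⟨C, hC⟩ := hS.exists_bound_of_continuousOn hf
  exact memLp_top_of_bound (hf.aestronglyMeasurable hS.measurableSet) C
    (ae_restrict_of_forall_mem hS.measurableSet hC)

lemma eqOn_zero_of_setIntegral_sq_eq_zero {a b : ℝ} (hab : a < b) {f : ℝ → ℝ}
    (hf : ContinuousOn f (Icc a b)) (h : ∫ x in Icc a b, f x ^ 2 = 0) : EqOn f 0 (Icc a b) := by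
  have hae := (integral_eq_zero_iff_of_nonneg (fun x => sq_nonneg (f x))
    ((hf.pow 2).integrableOn_compact isCompact_Icc)).1 h
  refine Measure.eqOn_Icc_of_ae_eq volume hab.ne ?_ hf continuousOn_const
  filter_upwards [hae] with x hx using pow_eq_zero_iff two_ne_zero |>.1 hx

section Mercer

variable {a b : ℝ} {K : ℝ → ℝ → ℝ} {lam : ℕ → ℝ} {φ : ℕ → ℝ → ℝ}

theorem sum_mul_sq_le_diag (hab : a < b)
    (hKcont : ContinuousOn (fun p : ℝ × ℝ => K p.1 p.2) (Icc a b ×ˢ Icc a b))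
    (hKsymm : ∀ s ∈ Icc a b, ∀ t ∈ Icc a b, K s t = K t s)
    (hKpsd : IsPosSemidefKernelOn (Icc a b) K) (hφcont : ∀ k, ContinuousOn (φ k) (Icc a b))
    (hon : ∀ j k, ∫ t in Icc a b, φ j t * φ k t = if j = k then 1 else 0)
    (heig : ∀ k, ∀ t ∈ Icc a b, ∫ s in Icc a b, K t s * φ k s = lam k * φ k t)
    (s : Finset ℕ) {t : ℝ} (ht : t ∈ Icc a b) : ∑ k ∈ s, lam k * φ k t ^ 2 ≤ K t t := by
  have hS : MeasurableSet (Icc a b ×ˢ Icc a b) := measurableSet_Icc.prod measurableSet_Icc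
  have hK : MemLp (fun p : ℝ × ℝ => K p.1 p.2) ∞
      ((volume.restrict (Icc a b)).prod (volume.restrict (Icc a b))) := by
    rw [Measure.prod_restrict]
    exact hKcont.memLp_top_restrict (isCompact_Icc.prod isCompact_Icc)
  have hKsymm' : ∀ᵐ p ∂(volume.restrict (Icc a b)).prod (volume.restrict (Icc a b)),
      K p.1 p.2 = K p.2 p.1 := by
    rw [Measure.prod_restrict]
    exact ae_restrict_of_forall_mem hS fun p hp => hKsymm _ hp.1 _ hp.2
  have hsum_cont : ContinuousOn (fun p : ℝ × ℝ => ∑ k ∈ s, lam k * φ k p.1 * φ k p.2)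
      (Icc a b ×ˢ Icc a b) := continuousOn_finsetSum _ fun k _ =>
    (continuousOn_const.mul ((hφcont k).comp continuousOn_fst fun _ hp => hp.1)).mul
      ((hφcont k).comp continuousOn_snd fun _ hp => hp.2)
  have hdiag := diag_nonneg_of_kernelForm_nonneg hab
    (R := fun x y => K x y - ∑ k ∈ s, lam k * φ k x * φ k y) (hKcont.sub hsum_cont) (fun g hg => by
      rw [kernelForm_sub_sum_mul_mul hK (fun k => (hφcont k).memLp_top_restrict isCompact_Icc) hg]
      exact sub_nonneg.2 (sum_mul_sq_integral_le_kernelForm hK hKsymm'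
        (fun g hg => hKpsd.kernelForm_nonneg isCompact_Icc hKcont hg)
        (fun k => (hφcont k).memLp_top_restrict isCompact_Icc) hon
        (fun k => ae_restrict_of_forall_mem measurableSet_Icc (heig k)) hg s)) ht
  simpa only [sub_nonneg, sq, mul_assoc] using hdiag

lemma tendstoUniformlyOn_sum_range_mul_mul_right
    (hKcont : ContinuousOn (fun p : ℝ × ℝ => K p.1 p.2) (Icc a b ×ˢ Icc a b))
    (hlam : ∀ k, 0 ≤ lam k)
    (hdiag : ∀ N, ∀ t ∈ Icc a b, ∑ k ∈ Finset.range N, lam k * φ k t ^ 2 ≤ K t t)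
    {s : ℝ} (hs : s ∈ Icc a b) :
    TendstoUniformlyOn (fun N u => ∑ k ∈ Finset.range N, lam k * φ k s * φ k u)
      (fun u => ∑' k, lam k * φ k s * φ k u) atTop (Icc a b) := by
  have hsum : ∀ t ∈ Icc a b, Summable fun k => lam k * φ k t ^ 2 :=
    fun t ht => summable_of_sum_range_le (fun k => mul_nonneg (hlam k) (sq_nonneg _)) (hdiag · t ht)
  obtain ⟨M, hM⟩ := (isCompact_Icc.prod isCompact_Icc).exists_bound_of_continuousOn hKcont
  refine tendstoUniformlyOn_of_sq_sub_le (M := M)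
    ((hsum s hs).hasSum.tendsto_sum_nat.tendstoUniformlyOn_const _) fun N u hu => ?_
  refine (sq_tsum_sub_sum_mul_mul_le hlam (hsum s hs) (hsum u hu) N).trans
    (mul_le_mul_of_nonneg_left ?_ (sub_nonneg.2 ((hsum s hs).sum_le_tsum _ fun k _ =>
      mul_nonneg (hlam k) (sq_nonneg _))))
  exact (Real.tsum_le_of_sum_range_le (fun k => mul_nonneg (hlam k) (sq_nonneg _))
    (hdiag · u hu)).trans ((le_abs_self _).trans (hM (u, u) ⟨hu, hu⟩))

theorem hasSum_mul_mul_of_complete (hab : a < b)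
    (hKcont : ContinuousOn (fun p : ℝ × ℝ => K p.1 p.2) (Icc a b ×ˢ Icc a b))
    (hlam : ∀ k, 0 ≤ lam k) (hφcont : ∀ k, ContinuousOn (φ k) (Icc a b))
    (hon : ∀ j k, ∫ t in Icc a b, φ j t * φ k t = if j = k then 1 else 0)
    (heig : ∀ k, ∀ t ∈ Icc a b, ∫ s in Icc a b, K t s * φ k s = lam k * φ k t)
    (hcomplete : ∀ g : ℝ → ℝ, MemLp g 2 (volume.restrict (Icc a b)) →
      (∀ k, ∫ t in Icc a b, g t * φ k t = 0) →
      ∀ t ∈ Icc a b, ∫ s in Icc a b, K t s * g s = 0)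
    (hdiag : ∀ N, ∀ t ∈ Icc a b, ∑ k ∈ Finset.range N, lam k * φ k t ^ 2 ≤ K t t)
    {s : ℝ} (hs : s ∈ Icc a b) {t : ℝ} (ht : t ∈ Icc a b) :
    HasSum (fun k => lam k * φ k s * φ k t) (K s t) := by
  have hint : ∀ f : ℝ → ℝ, ContinuousOn f (Icc a b) → IntegrableOn f (Icc a b) :=
    fun f hf => hf.integrableOn_compact isCompact_Icc
  set Sf : ℝ → ℝ := fun u => ∑' k, lam k * φ k s * φ k u
  have hunif := tendstoUniformlyOn_sum_range_mul_mul_right hKcont hlam hdiag hs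
  have hSfcont : ContinuousOn Sf (Icc a b) := hunif.continuousOn (Frequently.of_forall
    fun N => continuousOn_finsetSum _ fun k _ => continuousOn_const.mul (hφcont k))
  have hlimit : ∀ ψ, ContinuousOn ψ (Icc a b) → Tendsto
      (fun N => ∑ k ∈ Finset.range N, lam k * φ k s * ∫ u in Icc a b, φ k u * ψ u) atTop
      (𝓝 (∫ u in Icc a b, Sf u * ψ u)) := fun ψ hψ =>
    tendsto_sum_range_mul_setIntegral (c := fun k => lam k * φ k s) isCompact_Icc hφcont hunif hψ
  have hSfφ : ∀ j, ∫ u in Icc a b, Sf u * φ j u = lam j * φ j s := fun j =>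
    tendsto_nhds_unique (hlimit _ (hφcont j)) (tendsto_atTop_of_eventually_const
      (i₀ := j + 1) fun N hN => by
        simp [hon, Finset.sum_ite_eq', Finset.mem_range.2 (Nat.lt_of_succ_le hN)])
  have hKs : ContinuousOn (fun u => K s u) (Icc a b) :=
    hKcont.comp (continuousOn_const.prodMk continuousOn_id) fun u hu => ⟨hs, hu⟩
  -- `gd` is orthogonal to every `φ j`, hence to `Sf` and, by completeness, to `K s ·`.
  set gd : ℝ → ℝ := fun u => K s u - Sf u
  have hgdcont : ContinuousOn gd (Icc a b) := hKs.sub hSfcont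
  have horth : ∀ j, ∫ u in Icc a b, gd u * φ j u = 0 := fun j => by
    simp_rw [gd, sub_mul]
    rw [integral_sub (hint _ ?_) (hint _ ?_), heig j s hs, hSfφ j, sub_self]
    exacts [hKs.mul (hφcont j), hSfcont.mul (hφcont j)]
  have hKgd : ∫ u in Icc a b, K s u * gd u = 0 :=
    hcomplete gd (hgdcont.memLp_top_restrict isCompact_Icc |>.mono_exponent le_top) horth s hs
  have hSfgd : ∫ u in Icc a b, Sf u * gd u = 0 :=
    tendsto_nhds_unique (hlimit _ hgdcont) (tendsto_atTop_of_eventually_const (i₀ := 0)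
      fun N _ => Finset.sum_eq_zero fun k _ => by simp_rw [mul_comm (φ k _), horth, mul_zero])
  have hgd2 : ∫ u in Icc a b, gd u ^ 2 = 0 := by
    have hsplit : ∀ u, gd u ^ 2 = K s u * gd u - Sf u * gd u := fun u => by ring
    simp_rw [hsplit]
    rw [integral_sub (hint _ ?_) (hint _ ?_), hKgd, hSfgd, sub_zero]
    exacts [hKs.mul hgdcont, hSfcont.mul hgdcont]
  have hgd : K s t - Sf t = 0 := eqOn_zero_of_setIntegral_sq_eq_zero hab hgdcont hgd2 ht
  have hsum : ∀ u ∈ Icc a b, Summable fun k => lam k * φ k u ^ 2 :=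
    fun u hu => summable_of_sum_range_le (fun k => mul_nonneg (hlam k) (sq_nonneg _)) (hdiag · u hu)
  rw [sub_eq_zero.1 hgd]
  exact (summable_abs_mul_mul hlam (hsum s hs) (hsum t ht)).of_abs.hasSum

theorem tendstoUniformlyOn_sum_range_mul_mul
    (hKcont : ContinuousOn (fun p : ℝ × ℝ => K p.1 p.2) (Icc a b ×ˢ Icc a b))
    (hlam : ∀ k, 0 ≤ lam k) (hφcont : ∀ k, ContinuousOn (φ k) (Icc a b))
    (hexp : ∀ s ∈ Icc a b, ∀ t ∈ Icc a b, HasSum (fun k => lam k * φ k s * φ k t) (K s t)) :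
    TendstoUniformlyOn (fun N (p : ℝ × ℝ) => ∑ k ∈ Finset.range N, lam k * φ k p.1 * φ k p.2)
      (fun p => K p.1 p.2) atTop (Icc a b ×ˢ Icc a b) := by
  have hsq : ∀ t ∈ Icc a b, HasSum (fun k => lam k * φ k t ^ 2) (K t t) := fun t ht => by
    simpa only [sq, mul_assoc] using hexp t ht t ht
  obtain ⟨M, hM⟩ := (isCompact_Icc.prod isCompact_Icc).exists_bound_of_continuousOn hKcont
  have hdini : TendstoUniformlyOn (fun N t => ∑ k ∈ Finset.range N, lam k * φ k t ^ 2)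
      (fun t => K t t) atTop (Icc a b) :=
    Monotone.tendstoUniformlyOn_of_forall_tendsto isCompact_Icc
      (fun N => continuousOn_finsetSum _ fun k _ => continuousOn_const.mul ((hφcont k).pow 2))
      (fun t _ => monotone_nat_of_le_succ fun N => by
        rw [Finset.sum_range_succ]
        exact le_add_of_nonneg_right (mul_nonneg (hlam N) (sq_nonneg _)))
      (hKcont.comp (continuousOn_id.prodMk continuousOn_id) fun t ht => ⟨ht, ht⟩)
      fun t ht => (hsq t ht).tendsto_sum_nat
  -- Cauchy–Schwarz bounds the error at `(s, t)` by `M` times the diagonal tail at `s`.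
  refine tendstoUniformlyOn_of_sq_sub_le (M := M) ((hdini.comp Prod.fst).mono fun p hp => hp.1)
    fun N p hp => ?_
  simp only [Function.comp_apply]
  rw [← (hexp _ hp.1 _ hp.2).tsum_eq, ← (hsq _ hp.1).tsum_eq]
  refine (sq_tsum_sub_sum_mul_mul_le hlam (hsq _ hp.1).summable (hsq _ hp.2).summable N).trans
    (mul_le_mul_of_nonneg_left ?_ ?_)
  · rw [(hsq _ hp.2).tsum_eq]
    exact (le_abs_self _).trans (hM (p.2, p.2) ⟨hp.2, hp.2⟩)
  · exact sub_nonneg.2 ((hsq _ hp.1).summable.sum_le_tsum _ fun k _ =>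
      mul_nonneg (hlam k) (sq_nonneg _))

end Mercer

theorem mercer_expansion_general
    (a b : ℝ)
    (K : ℝ → ℝ → ℝ)
    (hKcont : ContinuousOn (fun p : ℝ × ℝ => K p.1 p.2)
      (Set.Icc a b ×ˢ Set.Icc a b))
    (hKsymm : ∀ s ∈ Set.Icc a b, ∀ t ∈ Set.Icc a b, K s t = K t s)
    (hKpsd : ∀ (n : ℕ) (t : Fin n → ℝ) (c : Fin n → ℝ),
      (∀ i, t i ∈ Set.Icc a b) →
      0 ≤ ∑ i, ∑ j, c i * c j * K (t i) (t j))
    (lam : ℕ → ℝ) (hpos : ∀ k, 0 < lam k)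
    (φ : ℕ → ℝ → ℝ) (hφcont : ∀ k, ContinuousOn (φ k) (Set.Icc a b))
    (hon : ∀ j k, (∫ t in Set.Icc a b, φ j t * φ k t) = if j = k then 1 else 0)
    (heig : ∀ k, ∀ t ∈ Set.Icc a b,
      (∫ s in Set.Icc a b, K t s * φ k s) = lam k * φ k t)
    -- completeness: any L² function orthogonal to all the `φ_k` is annihilated
    -- by the integral operator, i.e. `(λ_k, φ_k)` is all of the spectral data
    (hcomplete : ∀ g : ℝ → ℝ, MemLp g 2 (volume.restrict (Set.Icc a b)) →
      (∀ k, (∫ t in Set.Icc a b, g t * φ k t) = 0) →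
      ∀ t ∈ Set.Icc a b, (∫ s in Set.Icc a b, K t s * g s) = 0) :
    (∀ s ∈ Set.Icc a b, ∀ t ∈ Set.Icc a b,
      Summable (fun k => |lam k * φ k s * φ k t|) ∧
      HasSum (fun k => lam k * φ k s * φ k t) (K s t)) ∧
    TendstoUniformlyOn
      (fun N (p : ℝ × ℝ) => ∑ k ∈ Finset.range N, lam k * φ k p.1 * φ k p.2)
      (fun p => K p.1 p.2) Filter.atTop (Set.Icc a b ×ˢ Set.Icc a b) := by
  have hab : a < b := by
    by_contra! hba
    have h00 := hon 0 0
    rw [Measure.restrict_eq_zero.2 (by simp [Real.volume_Icc, hba]), integral_zero_measure] at h00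
    simp at h00
  have hlam : ∀ k, 0 ≤ lam k := fun k => (hpos k).le
  have hdiag : ∀ N, ∀ t ∈ Icc a b, ∑ k ∈ Finset.range N, lam k * φ k t ^ 2 ≤ K t t :=
    fun N t ht => sum_mul_sq_le_diag hab hKcont hKsymm hKpsd hφcont hon heig _ ht
  have hsum : ∀ t ∈ Icc a b, Summable fun k => lam k * φ k t ^ 2 :=
    fun t ht => summable_of_sum_range_le (fun k => mul_nonneg (hlam k) (sq_nonneg _)) (hdiag · t ht)
  have hexp : ∀ s ∈ Icc a b, ∀ t ∈ Icc a b, HasSum (fun k => lam k * φ k s * φ k t) (K s t) :=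
    fun s hs t ht =>
      hasSum_mul_mul_of_complete hab hKcont hlam hφcont hon heig hcomplete hdiag hs ht
  exact ⟨fun s hs t ht => ⟨summable_abs_mul_mul hlam (hsum s hs) (hsum t ht), hexp s hs t ht⟩,
    tendstoUniformlyOn_sum_range_mul_mul hKcont hlam hφcont hexp⟩

/-- Mercer expansion: a continuous symmetric positive semidefinite kernel `K` on
`J × J` (`J = [a,b]` compact) expands as `K(s,t) = ∑_k λ_k φ_k(s) φ_k(t)` in its
spectral data — continuous orthonormal eigenfunctions `φ_k` with eigenvalues
`λ_k > 0` spanning the complement of the kernel of the integral operator — and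
the series converges absolutely and uniformly on `J × J`. -/
theorem mercer_expansion
    (a b : ℝ) (hab : a ≤ b)
    (K : ℝ → ℝ → ℝ)
    (hKcont : ContinuousOn (fun p : ℝ × ℝ => K p.1 p.2)
      (Set.Icc a b ×ˢ Set.Icc a b))
    (hKsymm : ∀ s ∈ Set.Icc a b, ∀ t ∈ Set.Icc a b, K s t = K t s)
    (hKpsd : ∀ (n : ℕ) (t : Fin n → ℝ) (c : Fin n → ℝ),
      (∀ i, t i ∈ Set.Icc a b) →
      0 ≤ ∑ i, ∑ j, c i * c j * K (t i) (t j))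
    (lam : ℕ → ℝ) (hpos : ∀ k, 0 < lam k)
    (φ : ℕ → ℝ → ℝ) (hφcont : ∀ k, ContinuousOn (φ k) (Set.Icc a b))
    (hon : ∀ j k, (∫ t in Set.Icc a b, φ j t * φ k t) = if j = k then 1 else 0)
    (heig : ∀ k, ∀ t ∈ Set.Icc a b,
      (∫ s in Set.Icc a b, K t s * φ k s) = lam k * φ k t)
    -- completeness: any L² function orthogonal to all the `φ_k` is annihilated
    -- by the integral operator, i.e. `(λ_k, φ_k)` is all of the spectral data
    (hcomplete : ∀ g : ℝ → ℝ, MemLp g 2 (volume.restrict (Set.Icc a b)) →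
      (∀ k, (∫ t in Set.Icc a b, g t * φ k t) = 0) →
      ∀ t ∈ Set.Icc a b, (∫ s in Set.Icc a b, K t s * g s) = 0) :
    (∀ s ∈ Set.Icc a b, ∀ t ∈ Set.Icc a b,
      Summable (fun k => |lam k * φ k s * φ k t|) ∧
      HasSum (fun k => lam k * φ k s * φ k t) (K s t)) ∧
    TendstoUniformlyOn
      (fun N (p : ℝ × ℝ) => ∑ k ∈ Finset.range N, lam k * φ k p.1 * φ k p.2)
      (fun p => K p.1 p.2) Filter.atTop (Set.Icc a b ×ˢ Set.Icc a b) :=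
  mercer_expansion_general a b K hKcont hKsymm hKpsd lam hpos φ hφcont hon heig hcomplete
end
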